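/- arXiv:math/0409414 — 5 statements merged into one kernel-verified Lean document; each statement's English description precedes it below -/
import Mathlib

section
/- Let D be a set of states with an ordered finite crossing set V, and for a state S let m(S) denote its number of negative markers. Define d = \sum_v (-1)^{t(S,v)} d_v with t(S,v) the number of negative markers above v, and d^+ = \sum_v (-1)^{t^+(S,v)} d_v with t^+(S,v) the number of positive markers above v. If |V| = n, then the map g(S) = (-1)^{u(S)} S, where u(S) is the number of positively marked crossings v_i in S with i ≡ n+1 (mod 2), is a chain isomorphism (C, d) → (C, d^+). -/
/-!
Since `t(S,v) + t⁺(S,v) = n - i` counts all crossings above `v = v_i`, the signs of `d_v S` in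
`d` and in `d⁺` differ by `(-1)^{n-i}`. Switching the marker at `v_i` changes `u` by one exactly
when `i ≡ n + 1 (mod 2)`, i.e. `u(S) - u(S') ≡ n - i (mod 2)`, so `g` absorbs precisely this
discrepancy. Being diagonal with entries `±1`, `g` is an involution.
-/

open Finsupp

section Diagonal

variable {S : Type*}

theorem Finsupp.addHom_ext_single_one {M : Type*} [AddCommGroup M] {f g : (S →₀ ℤ) →+ M}
    (h : ∀ s, f (single s 1) = g (single s 1)) : f = g :=
  Finsupp.addHom_ext fun s m => by
    rw [← smul_single_one s m, map_zsmul, map_zsmul, h]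

variable {g : (S →₀ ℤ) →+ (S →₀ ℤ)} {ε : S → ℤ}

theorem apply_eq_smul_of_diagonal (hg : ∀ s, g (single s 1) = ε s • single s 1)
    {f : S →₀ ℤ} {c : ℤ} (hf : ∀ a ∈ f.support, ε a = c) : g f = c • f := by
  conv_lhs => rw [← f.sum_single]
  conv_rhs => rw [← f.sum_single]
  simp only [Finsupp.sum, map_sum, Finset.smul_sum]
  refine Finset.sum_congr rfl fun a ha => ?_
  rw [← smul_single_one a (f a), map_zsmul, hg, hf a ha, smul_comm]

theorem involutive_of_diagonal (hg : ∀ s, g (single s 1) = ε s • single s 1)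
    (hε : ∀ s, ε s * ε s = 1) : Function.Involutive g := by
  have : g.comp g = AddMonoidHom.id _ := addHom_ext_single_one fun s => by
    rw [AddMonoidHom.comp_apply, hg, map_zsmul, hg, smul_smul, hε, one_smul,
      AddMonoidHom.id_apply]
  exact DFunLike.congr_fun this

end Diagonal

section Markers

variable {α : Type*} [Finite α]

theorem ncard_neg_add_ncard_pos (m : α → ℤˣ) (P : α → Prop) :
    {w | P w ∧ m w = -1}.ncard + {w | P w ∧ m w = 1}.ncard = {w | P w}.ncard := by
  rw [← Set.ncard_union_eq]
  · congr 1
    ext w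
    rcases Int.units_eq_one_or (m w) with h | h <;> simp [h]
  · rw [Set.disjoint_left]
    rintro w ⟨-, h⟩ ⟨-, h'⟩
    exact absurd (h.symm.trans h') (by decide)

theorem ncard_pos_eq_add_of_flip {m m' : α → ℤˣ} {v : α} (hv : m v = 1) (hv' : m' v = -1)
    (hagree : ∀ w, w ≠ v → m' w = m w) (Q : α → Prop) [Decidable (Q v)] :
    {i | m i = 1 ∧ Q i}.ncard = {i | m' i = 1 ∧ Q i}.ncard + if Q v then 1 else 0 := by
  have hflip : {i | m' i = 1 ∧ Q i} = {i | m i = 1 ∧ Q i} \ {v} := by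
    ext i
    by_cases hi : i = v
    · subst hi; simp [hv']
    · simp [hi, hagree i hi]
  rw [hflip]
  split_ifs with hQ
  · exact (Set.ncard_sdiff_singleton_add_one (s := {i | m i = 1 ∧ Q i}) ⟨hv, hQ⟩).symm
  · rw [Set.sdiff_singleton_eq_self fun h => hQ h.2, add_zero]

end Markers

noncomputable section Signs

variable {n : ℕ}

def numNegAbove (m : Fin n → ℤˣ) (v : Fin n) : ℕ := {w | v < w ∧ m w = -1}.ncard

def numPosAbove (m : Fin n → ℤˣ) (v : Fin n) : ℕ := {w | v < w ∧ m w = 1}.ncard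

/-- `u(S)`: crossings are zero-based, so `i.1 + 1` is the paper's index of `i`. -/
def numPosSameParity (m : Fin n → ℤˣ) : ℕ :=
  {i : Fin n | m i = 1 ∧ (i.1 + 1) % 2 = (n + 1) % 2}.ncard

theorem numNegAbove_add_numPosAbove (m : Fin n → ℤˣ) (v : Fin n) :
    numNegAbove m v + numPosAbove m v = n - 1 - v := by
  rw [numNegAbove, numPosAbove, ncard_neg_add_ncard_pos, ← Fin.card_Ioi, ← Set.ncard_coe_finset,
    Finset.coe_Ioi]
  rfl

theorem neg_one_pow_numPosSameParity_of_flip {m m' : Fin n → ℤˣ} {v : Fin n}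
    (hv : m v = 1) (hv' : m' v = -1) (hagree : ∀ w, w ≠ v → m' w = m w) :
    (-1 : ℤ) ^ numPosSameParity m' =
      (-1) ^ (numNegAbove m v + numPosAbove m v + numPosSameParity m) := by
  rw [numNegAbove_add_numPosAbove, numPosSameParity, numPosSameParity,
    ncard_pos_eq_add_of_flip hv hv' hagree, neg_one_pow_eq_pow_mod_two,
    neg_one_pow_eq_pow_mod_two (n := _ + _)]
  have := v.isLt
  split_ifs <;> congr 1 <;> omega

end Signs

theorem stmt_2_general
    {S : Type*} (n : ℕ)
    (marker : S → Fin n → ℤˣ)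
    (Dv : Fin n → (S →₀ ℤ) →+ (S →₀ ℤ))
    (hsupp : ∀ (v : Fin n) (s : S), ∀ s' ∈ (Dv v (Finsupp.single s 1)).support,
        marker s v = 1 ∧ marker s' v = -1 ∧ ∀ w, w ≠ v → marker s' w = marker s w)
    (t tplus : S → Fin n → ℕ) (u : S → ℕ)
    (ht : ∀ (s : S) (v : Fin n), t s v = Set.ncard {w : Fin n | v < w ∧ marker s w = -1})
    (htplus : ∀ (s : S) (v : Fin n),
        tplus s v = Set.ncard {w : Fin n | v < w ∧ marker s w = 1})
    (hu : ∀ s : S, u s = Set.ncard {i : Fin n | marker s i = 1 ∧ (i.1 + 1) % 2 = (n + 1) % 2})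
    (d dplus : (S →₀ ℤ) →+ (S →₀ ℤ))
    (hd : ∀ s : S, d (Finsupp.single s 1) =
        ∑ v : Fin n, ((-1 : ℤ) ^ t s v) • Dv v (Finsupp.single s 1))
    (hdplus : ∀ s : S, dplus (Finsupp.single s 1) =
        ∑ v : Fin n, ((-1 : ℤ) ^ tplus s v) • Dv v (Finsupp.single s 1))
    (g : (S →₀ ℤ) →+ (S →₀ ℤ))
    (hg : ∀ s : S, g (Finsupp.single s 1) = ((-1 : ℤ) ^ u s) • Finsupp.single s 1) :
    g.comp d = dplus.comp g ∧ Function.Bijective g := by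
  have hg_Dv : ∀ s v, g (Dv v (single s 1)) =
      (-1 : ℤ) ^ (t s v + tplus s v + u s) • Dv v (single s 1) := fun s v =>
    apply_eq_smul_of_diagonal hg fun s' hs' => by
      obtain ⟨hv, hv', hagree⟩ := hsupp v s s' hs'
      rw [hu, hu, ht, htplus]
      exact neg_one_pow_numPosSameParity_of_flip hv hv' hagree
  refine ⟨addHom_ext_single_one fun s => ?_,
    (involutive_of_diagonal hg fun s => by rw [← mul_pow]; norm_num).bijective⟩
  simp only [AddMonoidHom.comp_apply, hd, hdplus, hg, map_sum, map_zsmul, hg_Dv,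
    Finset.smul_sum, smul_smul, ← pow_add]
  refine Finset.sum_congr rfl fun v _ => ?_
  rw [show t s v + (t s v + tplus s v + u s) = u s + tplus s v + 2 * t s v by ring,
    pow_add _ _ (2 * _), pow_mul, neg_one_sq, one_pow, mul_one]

/-- With crossings `v_1, …, v_n` (zero-based: `Fin n`, the `i`-th
crossing having one-based index `i+1`), the map `g(S) = (-1)^{u(S)} S`, where
`u(S)` is the number of positively marked crossings `v_i` with `i ≡ n+1 (mod 2)`,
is a chain isomorphism `(C, d) → (C, d⁺)`, where `d` uses signs counting negative
markers above `v` and `d⁺` uses signs counting positive markers above `v`. -/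
theorem stmt_2
    {S : Type*} (n : ℕ)
    (marker : S → Fin n → ℤˣ)
    (Dv : Fin n → (S →₀ ℤ) →+ (S →₀ ℤ))
    (hsupp : ∀ (v : Fin n) (s : S), ∀ s' ∈ (Dv v (Finsupp.single s 1)).support,
        marker s v = 1 ∧ marker s' v = -1 ∧ ∀ w, w ≠ v → marker s' w = marker s w)
    (hcomm : ∀ v w : Fin n, (Dv v).comp (Dv w) = (Dv w).comp (Dv v))
    (hsq : ∀ v : Fin n, (Dv v).comp (Dv v) = 0)
    (t tplus : S → Fin n → ℕ) (u : S → ℕ)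
    (ht : ∀ (s : S) (v : Fin n), t s v = Set.ncard {w : Fin n | v < w ∧ marker s w = -1})
    (htplus : ∀ (s : S) (v : Fin n),
        tplus s v = Set.ncard {w : Fin n | v < w ∧ marker s w = 1})
    (hu : ∀ s : S, u s = Set.ncard {i : Fin n | marker s i = 1 ∧ (i.1 + 1) % 2 = (n + 1) % 2})
    (d dplus : (S →₀ ℤ) →+ (S →₀ ℤ))
    (hd : ∀ s : S, d (Finsupp.single s 1) =
        ∑ v : Fin n, ((-1 : ℤ) ^ t s v) • Dv v (Finsupp.single s 1))
    (hdplus : ∀ s : S, dplus (Finsupp.single s 1) =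
        ∑ v : Fin n, ((-1 : ℤ) ^ tplus s v) • Dv v (Finsupp.single s 1))
    (g : (S →₀ ℤ) →+ (S →₀ ℤ))
    (hg : ∀ s : S, g (Finsupp.single s 1) = ((-1 : ℤ) ^ u s) • Finsupp.single s 1) :
    g.comp d = dplus.comp g ∧ Function.Bijective g :=
  stmt_2_general n marker Dv hsupp t tplus u ht htplus hu d dplus hd hdplus g hg
end

section
/- With the splittings ᾱ, β̄ as above and γ̂ = ᾱ d β̄, suppose additionally that ᾱ d_q β̄ = 0 for every partial derivative d_q with q ≠ p, that partial derivatives anticommute (d̂_p d̂_q = - d̂_q d̂_p for q ≠ p), and that ᾱ and β̄ commute with d̂_q for q ≠ p. Then d ∘ γ̂ = - γ̂ ∘ d. -/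
/-- With the splittings `ᾱ, β̄` of the skein short exact sequence
and `γ̂ = ᾱ ∘ d ∘ β̄ = ᾱ ∘ d̂_p ∘ β̄`, if `ᾱ d̂_q β̄ = 0` for every `q ≠ p`, the
signed partial derivatives anticommute (`d̂_p d̂_q = -d̂_q d̂_p` for `q ≠ p`), and
`ᾱ, β̄` commute with `d̂_q` for `q ≠ p`, then `d ∘ γ̂ = - γ̂ ∘ d` (where the
differentials on `C(D_∞)` and `C(D_0)` are `∑_{q ≠ p} d̂_q`). -/
theorem stmt_7
    {Q : Type*} [Fintype Q] [DecidableEq Q] (p : Q)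
    {CInf CP C0 : Type*}
    [AddCommGroup CInf] [AddCommGroup CP] [AddCommGroup C0]
    -- signed partial derivatives on the three complexes
    (dhatInf : Q → (CInf →+ CInf)) (dhatP : Q → (CP →+ CP)) (dhat0 : Q → (C0 →+ C0))
    (abar : CP →+ CInf) (bbar : C0 →+ CP)
    -- ᾱ d̂_q β̄ = 0 for q ≠ p
    (hzero : ∀ q ≠ p, abar.comp ((dhatP q).comp bbar) = 0)
    -- anticommutation of the signed partial derivatives
    (hanti : ∀ q ≠ p, (dhatP p).comp (dhatP q) = -((dhatP q).comp (dhatP p)))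
    -- ᾱ and β̄ commute with d̂_q for q ≠ p
    (habar : ∀ q ≠ p, abar.comp (dhatP q) = (dhatInf q).comp abar)
    (hbbar : ∀ q ≠ p, (dhatP q).comp bbar = bbar.comp (dhat0 q)) :
    ((∑ q ∈ Finset.univ.erase p, dhatInf q).comp
        (abar.comp ((dhatP p).comp bbar))) =
      -((abar.comp ((dhatP p).comp bbar)).comp
        (∑ q ∈ Finset.univ.erase p, dhat0 q)) := by
  ext x
  simp only [AddMonoidHom.comp_apply, AddMonoidHom.neg_apply,
    AddMonoidHom.finset_sum_apply, map_sum, ← Finset.sum_neg_distrib]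
  refine Finset.sum_congr rfl fun q hq => ?_
  have hq' : q ≠ p := (Finset.mem_erase.mp hq).1
  have h1 := congrArg (fun f => f (dhatP p (bbar x))) (habar q hq')
  have h2 := congrArg (fun f => abar (f (bbar x))) (hanti q hq')
  have h3 := congrArg (fun f => f x) (hbbar q hq')
  simp only [AddMonoidHom.comp_apply, AddMonoidHom.neg_apply, map_neg] at h1 h2 h3
  rw [← h1, ← h3, h2, neg_neg]
end

section
/- For a skein triple (D_p, D_0, D_∞) of link diagrams with crossing p, the maps α : C_{i,j,s}(D_∞) → C_{i-1,j-1,s}(D_p) defined by α(S) = (-1)^{t'(S)} α_0(S) (where α_0 inserts a negative marker at p and t'(S) counts negative markers before p), and β : C_{i,j,s}(D_p) → C_{i-1,j-1,s}(D_0) (projection killing states with negative marker at p and forgetting the marker at p on the rest) are chain maps, and 0 → C(D_∞) →^α C(D_p) →^β C(D_0) → 0 is exact. -/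
private lemma stmt10_hom_ext1 {A B : Type*} [AddCommGroup B] {f g : (A →₀ ℤ) →+ B}
    (h : ∀ a, f (Finsupp.single a 1) = g (Finsupp.single a 1)) : f = g := by
  apply Finsupp.addHom_ext
  intro a m
  have e : (Finsupp.single a m : A →₀ ℤ) = m • Finsupp.single a 1 := by
    simp [Finsupp.smul_single]
  rw [e, map_zsmul, map_zsmul, h]

private lemma stmt10_sum_subtype {SP M : Type*} [Fintype SP] [AddCommMonoid M]
    (P : SP → Prop) [DecidablePred P]
    (F : SP → M) (h0 : ∀ s, ¬ P s → F s = 0) :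
    ∑ s : Subtype P, F s.1 = ∑ s : SP, F s := by
  rw [← Finset.sum_subtype (p := P) (Finset.univ.filter P) (by simp) F]
  exact Finset.sum_filter_of_ne (fun x _ hx => by_contra fun h => hx (h0 x h))

/-- For a skein triple `(D_p, D_0, D_∞)` at the crossing `p`
(states of `D_∞`, resp. `D_0`, being identified with states of `D_p` carrying a
negative, resp. positive, marker at `p`), the maps
`α(S) = (-1)^{t'(S)} α₀(S)` (insertion of a negative marker at `p`, with
`t'(S)` the number of negative markers before `p`) and `β` (the projection
killing states with negative marker at `p` and forgetting the marker at `p`)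
are chain maps, and `0 → C(D_∞) →^α C(D_p) →^β C(D_0) → 0` is exact. -/
theorem stmt_10
    {Q SP : Type*} [Fintype Q] [LinearOrder Q] [Fintype SP] (p : Q)
    (markerP : SP → Q → ℤˣ)
    (inc : SP → SP → Q → ℤ)
    (hinc01 : ∀ s s' q, inc s s' q = 0 ∨ inc s s' q = 1)
    (hincmark : ∀ s s' q, inc s s' q = 1 →
        markerP s q = 1 ∧ markerP s' q = -1 ∧ ∀ r, r ≠ q → markerP s' r = markerP s r)
    -- sign exponents
    (tP : SP → Q → ℕ) (t' : SP → ℕ) (tInf t0 : SP → Q → ℕ)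
    (htP : ∀ s q, tP s q = Set.ncard {r : Q | q < r ∧ markerP s r = -1})
    (ht' : ∀ s, t' s = Set.ncard {r : Q | r < p ∧ markerP s r = -1})
    (htInf : ∀ s q, tInf s q = Set.ncard {r : Q | q < r ∧ r ≠ p ∧ markerP s r = -1})
    (ht0 : ∀ s q, t0 s q = Set.ncard {r : Q | q < r ∧ r ≠ p ∧ markerP s r = -1})
    -- the differentials on C(D_p), C(D_∞), C(D_0)
    (dP : (SP →₀ ℤ) →+ (SP →₀ ℤ))
    (dInf : ({s : SP // markerP s p = -1} →₀ ℤ) →+ ({s : SP // markerP s p = -1} →₀ ℤ))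
    (d0 : ({s : SP // markerP s p = 1} →₀ ℤ) →+ ({s : SP // markerP s p = 1} →₀ ℤ))
    (hdP : ∀ s : SP, dP (Finsupp.single s 1) =
        ∑ s' : SP, ∑ q : Q, (((-1 : ℤ) ^ tP s q) * inc s s' q) • Finsupp.single s' 1)
    (hdInf : ∀ s : {s : SP // markerP s p = -1}, dInf (Finsupp.single s 1) =
        ∑ s' : {s : SP // markerP s p = -1}, ∑ q ∈ Finset.univ.erase p,
          (((-1 : ℤ) ^ tInf s.1 q) * inc s.1 s'.1 q) • Finsupp.single s' 1)
    (hd0 : ∀ s : {s : SP // markerP s p = 1}, d0 (Finsupp.single s 1) =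
        ∑ s' : {s : SP // markerP s p = 1}, ∑ q ∈ Finset.univ.erase p,
          (((-1 : ℤ) ^ t0 s.1 q) * inc s.1 s'.1 q) • Finsupp.single s' 1)
    -- the maps α and β
    (α : ({s : SP // markerP s p = -1} →₀ ℤ) →+ (SP →₀ ℤ))
    (hα : ∀ s : {s : SP // markerP s p = -1},
        α (Finsupp.single s 1) = ((-1 : ℤ) ^ t' s.1) • Finsupp.single s.1 1)
    (β : (SP →₀ ℤ) →+ ({s : SP // markerP s p = 1} →₀ ℤ))
    (hβ : ∀ s : SP, β (Finsupp.single s 1) =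
        if h : markerP s p = 1 then Finsupp.single (⟨s, h⟩ : {s : SP // markerP s p = 1}) 1
        else 0) :
    dP.comp α = α.comp dInf
      ∧ β.comp dP = d0.comp β
      ∧ Function.Injective α
      ∧ Function.Surjective β
      ∧ α.range = β.ker := by
  classical
  have one_ne : (1 : ℤˣ) ≠ -1 := by decide
  have neg_ne_one : (-1 : ℤˣ) ≠ 1 := by decide
  have unit_dich : ∀ (u : ℤˣ), u ≠ 1 → u = -1 := fun u h =>
    (Int.units_eq_one_or u).resolve_left h
  -- inc vanishing at p when source marker is -1
  have hincp : ∀ s s' : SP, markerP s p = -1 → inc s s' p = 0 := by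
    intro s s' hs
    rcases hinc01 s s' p with h | h
    · exact h
    · exact absurd ((hincmark s s' p h).1.symm.trans hs) neg_ne_one.symm
  -- combinatorial claims
  have claim1 : ∀ (s : SP) (q : Q), markerP s p = -1 → q ≠ p →
      tP s q = tInf s q + (if q < p then 1 else 0) := by
    intro s q hm hq
    rw [htP, htInf]
    by_cases h : q < p
    · rw [if_pos h]
      have hset : {r : Q | q < r ∧ markerP s r = -1}
          = insert p {r : Q | q < r ∧ r ≠ p ∧ markerP s r = -1} := by
        ext r
        simp only [Set.mem_insert_iff, Set.mem_setOf_eq]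
        constructor
        · rintro ⟨h1, h2⟩
          by_cases hr : r = p
          · exact Or.inl hr
          · exact Or.inr ⟨h1, hr, h2⟩
        · rintro (rfl | ⟨h1, _, h2⟩)
          · exact ⟨h, hm⟩
          · exact ⟨h1, h2⟩
      rw [hset, Set.ncard_insert_of_notMem (by simp)]
    · rw [if_neg h, add_zero]
      congr 1
      ext r
      simp only [Set.mem_setOf_eq]
      constructor
      · rintro ⟨h1, h2⟩
        exact ⟨h1, fun hr => h (hr ▸ h1), h2⟩
      · rintro ⟨h1, _, h2⟩
        exact ⟨h1, h2⟩
  have claim2 : ∀ (s s' : SP) (q : Q), markerP s q = 1 → markerP s' q = -1 →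
      (∀ r, r ≠ q → markerP s' r = markerP s r) →
      t' s' = t' s + (if q < p then 1 else 0) := by
    intro s s' q h1 h2 h3
    rw [ht', ht']
    by_cases h : q < p
    · rw [if_pos h]
      have hset : {r : Q | r < p ∧ markerP s' r = -1}
          = insert q {r : Q | r < p ∧ markerP s r = -1} := by
        ext r
        simp only [Set.mem_insert_iff, Set.mem_setOf_eq]
        constructor
        · rintro ⟨hr1, hr2⟩
          by_cases hrq : r = q
          · exact Or.inl hrq
          · exact Or.inr ⟨hr1, (h3 r hrq) ▸ hr2⟩
        · rintro (rfl | ⟨hr1, hr2⟩)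
          · exact ⟨h, h2⟩
          · refine ⟨hr1, ?_⟩
            by_cases hrq : r = q
            · subst hrq; exact h2
            · rw [h3 r hrq]; exact hr2
      rw [hset, Set.ncard_insert_of_notMem (by simp [h1, one_ne])]
    · rw [if_neg h, add_zero]
      congr 1
      ext r
      simp only [Set.mem_setOf_eq]
      have hrq : ∀ r : Q, r < p → r ≠ q := fun r hr hrq => h (hrq ▸ hr)
      constructor
      · rintro ⟨hr1, hr2⟩
        exact ⟨hr1, (h3 r (hrq r hr1)).symm ▸ hr2⟩
      · rintro ⟨hr1, hr2⟩
        exact ⟨hr1, (h3 r (hrq r hr1)).trans hr2⟩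
  have claim3 : ∀ (s : SP) (q : Q), markerP s p = 1 → tP s q = t0 s q := by
    intro s q hm
    rw [htP, ht0]
    congr 1
    ext r
    simp only [Set.mem_setOf_eq]
    constructor
    · rintro ⟨h1, h2⟩
      refine ⟨h1, ?_, h2⟩
      rintro rfl
      exact one_ne (hm.symm.trans h2)
    · rintro ⟨h1, _, h2⟩
      exact ⟨h1, h2⟩
  -- Part 1 : dP ∘ α = α ∘ dInf
  have part1 : dP.comp α = α.comp dInf := by
    apply stmt10_hom_ext1
    rintro ⟨s, hs⟩
    simp only [AddMonoidHom.coe_comp, Function.comp_apply]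
    rw [hα ⟨s, hs⟩, map_zsmul, hdP, hdInf, map_sum]
    simp only [map_sum, map_zsmul, hα, Finset.smul_sum, smul_smul]
    -- extend the inner sums over `erase p` to `univ`
    have step1 : ∀ s' : {s : SP // markerP s p = -1},
        (∑ q ∈ Finset.univ.erase p,
          (((-1 : ℤ) ^ tInf s q * inc s s'.1 q) * (-1 : ℤ) ^ t' s'.1) • Finsupp.single s'.1 (1 : ℤ))
        = ∑ q : Q,
          (((-1 : ℤ) ^ tInf s q * inc s s'.1 q) * (-1 : ℤ) ^ t' s'.1) • Finsupp.single s'.1 (1 : ℤ) := by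
      intro s'
      exact Finset.sum_erase _ (by rw [hincp s s'.1 hs]; simp)
    rw [Finset.sum_congr rfl (fun s' _ => step1 s')]
    -- extend the subtype sum to all of SP
    rw [stmt10_sum_subtype (fun x => markerP x p = -1)
        (fun s' => ∑ q : Q,
          (((-1 : ℤ) ^ tInf s q * inc s s' q) * (-1 : ℤ) ^ t' s') • Finsupp.single s' (1 : ℤ))
        (by
          intro s' hs'
          apply Finset.sum_eq_zero
          intro q _
          rcases hinc01 s s' q with h | h
          · simp [h]
          · obtain ⟨h1, h2, h3⟩ := hincmark s s' q h
            by_cases hqp : q = p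
            · subst hqp
              exact absurd (h1.symm.trans hs) neg_ne_one.symm
            · exact absurd ((h3 p (Ne.symm hqp)).trans hs) hs')]
    -- termwise comparison
    refine Finset.sum_congr rfl fun s' _ => Finset.sum_congr rfl fun q _ => ?_
    rcases hinc01 s s' q with h | h
    · simp [h]
    · obtain ⟨h1, h2, h3⟩ := hincmark s s' q h
      have hqp : q ≠ p := by
        rintro rfl
        exact one_ne (h1.symm.trans hs)
      have e1 := claim1 s q hs hqp
      have e2 := claim2 s s' q h1 h2 h3
      have hexp : t' s + tP s q = tInf s q + t' s' := by
        split_ifs at e1 e2 <;> omega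
      have hc : (-1 : ℤ) ^ t' s * ((-1 : ℤ) ^ tP s q * inc s s' q)
          = ((-1 : ℤ) ^ tInf s q * inc s s' q) * (-1 : ℤ) ^ t' s' := by
        rw [h, mul_one, mul_one, ← pow_add, ← pow_add, hexp]
      rw [← smul_smul, ← hc, smul_smul]
  -- Part 2 : β ∘ dP = d0 ∘ β
  have part2 : β.comp dP = d0.comp β := by
    apply stmt10_hom_ext1
    intro s
    simp only [AddMonoidHom.coe_comp, Function.comp_apply]
    rw [hdP, map_sum, hβ s]
    simp only [map_sum, map_zsmul, hβ]
    by_cases hs1 : markerP s p = 1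
    · rw [dif_pos hs1, hd0]
      -- rewrite RHS singles through the dite form
      have hG : ∀ s' : {x : SP // markerP x p = 1},
          (Finsupp.single s' 1 : {x : SP // markerP x p = 1} →₀ ℤ)
          = if h : markerP s'.1 p = 1
              then Finsupp.single (⟨s'.1, h⟩ : {x : SP // markerP x p = 1}) (1 : ℤ) else 0 := by
        intro s'
        rw [dif_pos s'.2]
      have step1 : ∀ s' : {x : SP // markerP x p = 1},
          (∑ q ∈ Finset.univ.erase p,
            (((-1 : ℤ) ^ t0 s q) * inc s s'.1 q) • Finsupp.single s' (1 : ℤ))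
          = ∑ q : Q, (((-1 : ℤ) ^ t0 s q) * inc s s'.1 q) •
              (if h : markerP s'.1 p = 1
                then Finsupp.single (⟨s'.1, h⟩ : {x : SP // markerP x p = 1}) (1 : ℤ) else 0) := by
        intro s'
        rw [← hG s']
        refine Finset.sum_erase _ ?_
        have : inc s s'.1 p = 0 := by
          rcases hinc01 s s'.1 p with h | h
          · exact h
          · exact absurd ((hincmark s s'.1 p h).2.1.symm.trans s'.2) neg_ne_one
        rw [this]; simp
      rw [Finset.sum_congr rfl (fun s' _ => step1 s')]
      rw [stmt10_sum_subtype (fun x => markerP x p = 1)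
          (fun s' => ∑ q : Q, (((-1 : ℤ) ^ t0 s q) * inc s s' q) •
              (if h : markerP s' p = 1
                then Finsupp.single (⟨s', h⟩ : {x : SP // markerP x p = 1}) (1 : ℤ) else 0))
          (by
            intro s' hs'
            apply Finset.sum_eq_zero
            intro q _
            rw [dif_neg hs']
            simp)]
      refine Finset.sum_congr rfl fun s' _ => Finset.sum_congr rfl fun q _ => ?_
      rw [claim3 s q hs1]
    · rw [dif_neg hs1, map_zero]
      have hs : markerP s p = -1 := unit_dich _ hs1
      apply Finset.sum_eq_zero
      intro s' _
      apply Finset.sum_eq_zero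
      intro q _
      rcases hinc01 s s' q with h | h
      · simp [h]
      · obtain ⟨h1, h2, h3⟩ := hincmark s s' q h
        by_cases hqp : q = p
        · subst hqp
          exact absurd h1 hs1
        · have : markerP s' p ≠ 1 := by
            rw [h3 p (Ne.symm hqp), hs]
            exact neg_ne_one
          rw [dif_neg this]
          simp
  -- the retraction γ and the section ι
  set γ : (SP →₀ ℤ) →+ ({s : SP // markerP s p = -1} →₀ ℤ) :=
    Finsupp.liftAddHom (fun s =>
      if h : markerP s p = -1
        then (Finsupp.singleAddHom (⟨s, h⟩ : {s : SP // markerP s p = -1})).comp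
              (AddMonoidHom.mulLeft ((-1 : ℤ) ^ t' s))
        else 0) with hγdef
  have hγ : ∀ (s : SP) (m : ℤ), γ (Finsupp.single s m)
      = if h : markerP s p = -1
          then Finsupp.single (⟨s, h⟩ : {s : SP // markerP s p = -1}) (((-1 : ℤ) ^ t' s) * m)
          else 0 := by
    intro s m
    rw [hγdef, Finsupp.liftAddHom_apply_single]
    by_cases h : markerP s p = -1
    · rw [dif_pos h, dif_pos h]
      rfl
    · rw [dif_neg h, dif_neg h]
      rfl
  set ι : ({s : SP // markerP s p = 1} →₀ ℤ) →+ (SP →₀ ℤ) :=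
    Finsupp.liftAddHom (fun s => Finsupp.singleAddHom s.1) with hιdef
  have hι : ∀ (s : {s : SP // markerP s p = 1}) (m : ℤ),
      ι (Finsupp.single s m) = Finsupp.single s.1 m := by
    intro s m
    rw [hιdef, Finsupp.liftAddHom_apply_single]
    rfl
  -- γ ∘ α = id
  have hγα : γ.comp α = AddMonoidHom.id _ := by
    apply stmt10_hom_ext1
    rintro ⟨s, hs⟩
    simp only [AddMonoidHom.coe_comp, Function.comp_apply, AddMonoidHom.id_apply]
    rw [hα ⟨s, hs⟩, map_zsmul, hγ s 1, dif_pos hs, mul_one, Finsupp.smul_single]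
    rw [smul_eq_mul, ← pow_add]
    rw [Even.neg_one_pow ⟨t' s, rfl⟩]
  have inj : Function.Injective α := by
    intro x y hxy
    have hx := DFunLike.congr_fun hγα x
    have hy := DFunLike.congr_fun hγα y
    simp only [AddMonoidHom.coe_comp, Function.comp_apply, AddMonoidHom.id_apply] at hx hy
    rw [← hx, ← hy, hxy]
  -- β ∘ ι = id
  have hβι : β.comp ι = AddMonoidHom.id _ := by
    apply stmt10_hom_ext1
    rintro ⟨s, hs⟩
    simp only [AddMonoidHom.coe_comp, Function.comp_apply, AddMonoidHom.id_apply]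
    rw [hι ⟨s, hs⟩ 1, hβ s, dif_pos hs]
  have surj : Function.Surjective β := by
    intro y
    refine ⟨ι y, ?_⟩
    have := DFunLike.congr_fun hβι y
    simpa using this
  -- β ∘ α = 0
  have hβα : β.comp α = 0 := by
    apply stmt10_hom_ext1
    rintro ⟨s, hs⟩
    simp only [AddMonoidHom.coe_comp, Function.comp_apply, AddMonoidHom.zero_apply]
    rw [hα ⟨s, hs⟩, map_zsmul, hβ s, dif_neg (by rw [hs]; exact neg_ne_one)]
    simp
  -- α ∘ γ + ι ∘ β = id
  have hsplit : α.comp γ + ι.comp β = AddMonoidHom.id _ := by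
    apply stmt10_hom_ext1
    intro s
    simp only [AddMonoidHom.add_apply, AddMonoidHom.coe_comp, Function.comp_apply,
      AddMonoidHom.id_apply]
    by_cases h : markerP s p = -1
    · rw [hγ s 1, dif_pos h, mul_one, hβ s,
        dif_neg (by rw [h]; exact neg_ne_one), map_zero, add_zero]
      have : (Finsupp.single (⟨s, h⟩ : {s : SP // markerP s p = -1}) ((-1 : ℤ) ^ t' s))
          = ((-1 : ℤ) ^ t' s) • Finsupp.single (⟨s, h⟩ : {s : SP // markerP s p = -1}) 1 := by
        simp [Finsupp.smul_single]
      rw [this, map_zsmul, hα ⟨s, h⟩, smul_smul, ← pow_add,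
        Even.neg_one_pow ⟨t' s, rfl⟩, one_smul]
    · have h1 : markerP s p = 1 := by
        rcases Int.units_eq_one_or (markerP s p) with h' | h'
        · exact h'
        · exact absurd h' h
      rw [hγ s 1, dif_neg h, map_zero, zero_add, hβ s, dif_pos h1, hι ⟨s, h1⟩ 1]
  have range_ker : α.range = β.ker := by
    ext x
    constructor
    · rintro ⟨y, rfl⟩
      have := DFunLike.congr_fun hβα y
      simpa [AddMonoidHom.mem_ker] using this
    · intro hx
      rw [AddMonoidHom.mem_ker] at hx
      refine ⟨γ x, ?_⟩
      have := DFunLike.congr_fun hsplit x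
      simp only [AddMonoidHom.add_apply, AddMonoidHom.coe_comp, Function.comp_apply,
        AddMonoidHom.id_apply, hx, map_zero, add_zero] at this
      exact this
  exact ⟨part1, part2, inj, surj, range_ker⟩
end

section
/- Let ρ_{II} = f + g∘γ : C_{i,j,s}(D_0) → C_{i,j,s}(D') where D' is obtained from D_0 by a Reidemeister II move. Suppose: (i) d∘f = f∘d + η∘ι∘γ; (ii) d∘g = g∘d - η∘ι on the image of γ; (iii) γ is a chain map; (iv) γ preserves the negative-marker count m. Then ρ_{II} is a chain map: d∘ρ_{II} = ρ_{II}∘d. -/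
private lemma aux_expand {α β : Type*} [AddCommGroup β] (h : (α →₀ ℤ) →+ β) (x : α →₀ ℤ) :
    h x = x.sum fun s c => c • h (Finsupp.single s 1) := by
  conv_lhs => rw [← x.sum_single]
  rw [map_finsuppSum]
  refine Finsupp.sum_congr fun s _ => ?_
  rw [← map_zsmul, Finsupp.smul_single, smul_eq_mul, mul_one]



/-- The Reidemeister II map `ρ_{II} = f + g ∘ γ` is a chain map,
given that (i) `d f(S) = f d(S) + (-1)^{m(S)} ι γ(S)`;
(ii) `d g(S) = g d(S) + (-1)^{m(S)+1} ι(S)` on states (hence in particular on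
the image of `γ`); (iii) `γ` is a chain map; and (iv) `γ` preserves the
negative-marker count `m` (every summand `S_i` of `γ(S)` has `m(S_i) = m(S)`). -/
theorem stmt_16
    {S0 SInf S' : Type*}
    (m0 : S0 → ℕ) (mInf : SInf → ℕ)
    (d0 : (S0 →₀ ℤ) →+ (S0 →₀ ℤ))
    (dInf : (SInf →₀ ℤ) →+ (SInf →₀ ℤ))
    (d' : (S' →₀ ℤ) →+ (S' →₀ ℤ))
    (f : (S0 →₀ ℤ) →+ (S' →₀ ℤ))
    (g : (SInf →₀ ℤ) →+ (S' →₀ ℤ))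
    (γ : (S0 →₀ ℤ) →+ (SInf →₀ ℤ))
    (ι : (SInf →₀ ℤ) →+ (S' →₀ ℤ))
    -- (i)
    (hf : ∀ s : S0, d' (f (Finsupp.single s 1)) =
        f (d0 (Finsupp.single s 1)) + ((-1 : ℤ) ^ m0 s) • ι (γ (Finsupp.single s 1)))
    -- (ii)
    (hg : ∀ s : SInf, d' (g (Finsupp.single s 1)) =
        g (dInf (Finsupp.single s 1)) + ((-1 : ℤ) ^ (mInf s + 1)) • ι (Finsupp.single s 1))
    -- (iii) γ is a chain map
    (hγ : dInf.comp γ = γ.comp d0)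
    -- (iv) γ preserves the number of negative markers
    (hmγ : ∀ s : S0, ∀ s' ∈ (γ (Finsupp.single s 1)).support, mInf s' = m0 s) :
    d'.comp (f + g.comp γ) = (f + g.comp γ).comp d0 := by
  ext s : 2
  simp only [AddMonoidHom.coe_comp, Function.comp_apply, AddMonoidHom.add_apply, map_add,
    Finsupp.singleAddHom_apply]
  set x := γ (Finsupp.single s 1) with hx
  have key : d' (g x) = g (dInf x) + ((-1 : ℤ) ^ (m0 s + 1)) • ι x := by
    have e1 := aux_expand (d'.comp g) x
    simp only [AddMonoidHom.coe_comp, Function.comp_apply] at e1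
    rw [e1]
    have : (x.sum fun s' c => c • d' (g (Finsupp.single s' 1)))
        = x.sum fun s' c => c • g (dInf (Finsupp.single s' 1))
          + c • (((-1 : ℤ) ^ (m0 s + 1)) • ι (Finsupp.single s' 1)) := by
      refine Finsupp.sum_congr fun s' hs' => ?_
      rw [hg s', hmγ s s' hs', smul_add]
    rw [this, Finsupp.sum_add]
    congr 1
    · exact (aux_expand (g.comp dInf) x).symm
    · rw [aux_expand ι x, Finsupp.smul_sum]
      exact Finsupp.sum_congr fun s' _ => smul_comm _ _ _
  rw [hf s, key, ← hx]
  have hd : dInf x = γ (d0 (Finsupp.single s 1)) := by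
    rw [hx, ← AddMonoidHom.comp_apply, hγ]; rfl
  rw [hd, pow_succ, mul_neg_one, neg_smul]
  abel
end

section
/- In the setting of the Reidemeister III proof: given chain maps α, β forming a short exact sequence 0 → C(D_-) →^α C'(D) →^β C'(D_+) → 0 and similarly for D', a chain isomorphism ρ : C'(D_+) → C'(D'_+), a chain isomorphism f : C(D_-) → C(D'_-), and splittings ᾱ, β̄, define ρ_{III} = β̄' ρ β + α' f ᾱ. Then ρ_{III} ∘ α = α' ∘ f and β' ∘ ρ_{III} = ρ ∘ β, so the ladder of short exact sequences commutes; if moreover f∘γ̂ = γ̂'∘ρ (compatibility of connecting maps), then ρ_{III} is a chain map and induces an isomorphism on homology by the five lemma. -/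
/-- In the Reidemeister III setting, with two short exact
sequences `0 → C(D_-) →^α C'(D) →^β C'(D_+) → 0` and
`0 → C(D'_-) →^{α'} C'(D') →^{β'} C'(D'_+) → 0` of chain complexes, a chain
isomorphism `ρ : C'(D_+) → C'(D'_+)`, a chain isomorphism `f : C(D_-) → C(D'_-)`,
and abelian-group splittings `ᾱ, β̄` (resp. `ᾱ', β̄'`), the map
`ρ_{III} = β̄' ρ β + α' f ᾱ` satisfies `ρ_{III} α = α' f` and `β' ρ_{III} = ρ β`
(the ladder commutes); and if furthermore `f ∘ γ̂ = γ̂' ∘ ρ` where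
`γ̂ = ᾱ d β̄` and `γ̂' = ᾱ' d' β̄'`, then `ρ_{III}` is a chain map and induces an
isomorphism on homology (by the five lemma). -/
theorem stmt_17
    {Cm CD Cp Cm' CD' Cp' : Type*}
    [AddCommGroup Cm] [AddCommGroup CD] [AddCommGroup Cp]
    [AddCommGroup Cm'] [AddCommGroup CD'] [AddCommGroup Cp']
    (dm : Cm →+ Cm) (dD : CD →+ CD) (dp : Cp →+ Cp)
    (dm' : Cm' →+ Cm') (dD' : CD' →+ CD') (dp' : Cp' →+ Cp')
    (hdm : dm.comp dm = 0) (hdD : dD.comp dD = 0) (hdp : dp.comp dp = 0)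
    (hdm' : dm'.comp dm' = 0) (hdD' : dD'.comp dD' = 0) (hdp' : dp'.comp dp' = 0)
    (α : Cm →+ CD) (β : CD →+ Cp) (α' : Cm' →+ CD') (β' : CD' →+ Cp')
    -- chain maps
    (hα : dD.comp α = α.comp dm) (hβ : dp.comp β = β.comp dD)
    (hα' : dD'.comp α' = α'.comp dm') (hβ' : dp'.comp β' = β'.comp dD')
    -- exactness of both rows
    (hainj : Function.Injective α) (hbsurj : Function.Surjective β)
    (hexact : α.range = β.ker)
    (hainj' : Function.Injective α') (hbsurj' : Function.Surjective β')
    (hexact' : α'.range = β'.ker)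
    -- splittings of abelian groups
    (abar : CD →+ Cm) (bbar : Cp →+ CD) (abar' : CD' →+ Cm') (bbar' : Cp' →+ CD')
    (h1 : abar.comp α = AddMonoidHom.id Cm) (h2 : β.comp bbar = AddMonoidHom.id Cp)
    (h3 : α.comp abar + bbar.comp β = AddMonoidHom.id CD)
    (h4 : abar.comp bbar = 0) (h5 : β.comp α = 0)
    (h1' : abar'.comp α' = AddMonoidHom.id Cm') (h2' : β'.comp bbar' = AddMonoidHom.id Cp')
    (h3' : α'.comp abar' + bbar'.comp β' = AddMonoidHom.id CD')
    (h4' : abar'.comp bbar' = 0) (h5' : β'.comp α' = 0)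
    -- ρ and f are chain isomorphisms
    (ρ : Cp →+ Cp') (hρ : dp'.comp ρ = ρ.comp dp) (hρbij : Function.Bijective ρ)
    (f : Cm →+ Cm') (hf : dm'.comp f = f.comp dm) (hfbij : Function.Bijective f)
    -- compatibility of the connecting-map representatives: f ∘ γ̂ = γ̂' ∘ ρ
    (hcompat : f.comp (abar.comp (dD.comp bbar)) =
        (abar'.comp (dD'.comp bbar')).comp ρ) :
    ((bbar'.comp (ρ.comp β) + α'.comp (f.comp abar)).comp α = α'.comp f)
    ∧ (β'.comp (bbar'.comp (ρ.comp β) + α'.comp (f.comp abar)) = ρ.comp β)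
    ∧ (dD'.comp (bbar'.comp (ρ.comp β) + α'.comp (f.comp abar)) =
        (bbar'.comp (ρ.comp β) + α'.comp (f.comp abar)).comp dD)
    -- the induced map on homology is injective and surjective
    ∧ (∀ x : CD, dD x = 0 →
        dD' ((bbar'.comp (ρ.comp β) + α'.comp (f.comp abar)) x) = 0)
    ∧ (∀ x : CD, dD x = 0 →
        (∃ b : CD', (bbar'.comp (ρ.comp β) + α'.comp (f.comp abar)) x = dD' b) →
        ∃ a : CD, x = dD a)
    ∧ (∀ y : CD', dD' y = 0 →
        ∃ x : CD, dD x = 0 ∧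
          ∃ b : CD', y = (bbar'.comp (ρ.comp β) + α'.comp (f.comp abar)) x + dD' b) := by
  set T := bbar'.comp (ρ.comp β) + α'.comp (f.comp abar) with hT
  -- pointwise versions of hypotheses
  have pdD : ∀ x, dD (dD x) = 0 := fun x => DFunLike.congr_fun hdD x
  have pα : ∀ x, dD (α x) = α (dm x) := fun x => DFunLike.congr_fun hα x
  have pβ : ∀ x, dp (β x) = β (dD x) := fun x => DFunLike.congr_fun hβ x
  have pα' : ∀ x, dD' (α' x) = α' (dm' x) := fun x => DFunLike.congr_fun hα' x
  have pβ' : ∀ x, dp' (β' x) = β' (dD' x) := fun x => DFunLike.congr_fun hβ' x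
  have i1 : ∀ x, abar (α x) = x := fun x => DFunLike.congr_fun h1 x
  have i2 : ∀ z, β (bbar z) = z := fun z => DFunLike.congr_fun h2 z
  have i3 : ∀ x, α (abar x) + bbar (β x) = x := fun x => DFunLike.congr_fun h3 x
  have i4 : ∀ z, abar (bbar z) = 0 := fun z => DFunLike.congr_fun h4 z
  have i5 : ∀ m, β (α m) = 0 := fun m => DFunLike.congr_fun h5 m
  have i1' : ∀ x, abar' (α' x) = x := fun x => DFunLike.congr_fun h1' x
  have i2' : ∀ z, β' (bbar' z) = z := fun z => DFunLike.congr_fun h2' z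
  have i3' : ∀ x, α' (abar' x) + bbar' (β' x) = x := fun x => DFunLike.congr_fun h3' x
  have i4' : ∀ z, abar' (bbar' z) = 0 := fun z => DFunLike.congr_fun h4' z
  have i5' : ∀ m, β' (α' m) = 0 := fun m => DFunLike.congr_fun h5' m
  have pρ : ∀ x, dp' (ρ x) = ρ (dp x) := fun x => DFunLike.congr_fun hρ x
  have pf : ∀ x, dm' (f x) = f (dm x) := fun x => DFunLike.congr_fun hf x
  have pcompat : ∀ z, f (abar (dD (bbar z))) = abar' (dD' (bbar' (ρ z))) :=
    fun z => DFunLike.congr_fun hcompat z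
  have pT : ∀ x, T x = bbar' (ρ (β x)) + α' (f (abar x)) := fun x => rfl
  -- inverses
  set eρ := AddEquiv.ofBijective ρ hρbij with heρ
  set ef := AddEquiv.ofBijective f hfbij with hef
  have psymmρ : ∀ y, ρ (eρ.symm y) = y := fun y => eρ.apply_symm_apply y
  have ρsymmρ : ∀ x, eρ.symm (ρ x) = x := fun x => eρ.symm_apply_apply x
  have psymmf : ∀ y, f (ef.symm y) = y := fun y => ef.apply_symm_apply y
  have pρinv : ∀ y, dp (eρ.symm y) = eρ.symm (dp' y) := by
    intro y
    apply hρbij.1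
    rw [← pρ, psymmρ, psymmρ]
  have pfinv : ∀ y, dm (ef.symm y) = ef.symm (dm' y) := by
    intro y
    apply hfbij.1
    rw [← pf, psymmf, psymmf]
  -- structural lemmas
  have dbbar : ∀ w, dD (bbar w) = α (abar (dD (bbar w))) + bbar (dp w) := by
    intro w
    have h := i3 (dD (bbar w))
    have h0 : β (dD (bbar w)) = dp w := by rw [← pβ, i2]
    rw [h0] at h
    exact h.symm
  have dbbar' : ∀ w, dD' (bbar' w) = α' (abar' (dD' (bbar' w))) + bbar' (dp' w) := by
    intro w
    have h := i3' (dD' (bbar' w))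
    have h0 : β' (dD' (bbar' w)) = dp' w := by rw [← pβ', i2']
    rw [h0] at h
    exact h.symm
  have abarD : ∀ x, abar (dD x) = dm (abar x) + abar (dD (bbar (β x))) := by
    intro x
    have hx : dD x = dD (α (abar x)) + dD (bbar (β x)) := by rw [← map_add, i3]
    rw [hx, map_add, pα, i1]
  have abarD' : ∀ x, abar' (dD' x) = dm' (abar' x) + abar' (dD' (bbar' (β' x))) := by
    intro x
    have hx : dD' x = dD' (α' (abar' x)) + dD' (bbar' (β' x)) := by rw [← map_add, i3']
    rw [hx, map_add, pα', i1']
  -- the three structural statements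
  have P1 : T.comp α = α'.comp f := by
    refine AddMonoidHom.ext fun m => ?_
    show T (α m) = α' (f m)
    rw [pT, i5, i1, map_zero, map_zero, zero_add]
  have P2 : β'.comp T = ρ.comp β := by
    refine AddMonoidHom.ext fun x => ?_
    show β' (T x) = ρ (β x)
    rw [pT, map_add, i2', i5', add_zero]
  have P3 : dD'.comp T = T.comp dD := by
    refine AddMonoidHom.ext fun x => ?_
    show dD' (T x) = T (dD x)
    have e1 : dD' (bbar' (ρ (β x))) =
        α' (f (abar (dD (bbar (β x))))) + bbar' (ρ (β (dD x))) := by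
      rw [dbbar' (ρ (β x)), ← pcompat, pρ, pβ]
    have e2 : dD' (α' (f (abar x))) = α' (f (dm (abar x))) := by rw [pα', pf]
    rw [pT, pT, map_add, e1, e2, abarD x, map_add f, map_add α']
    abel
  have pP1 : ∀ m, T (α m) = α' (f m) := fun m => DFunLike.congr_fun P1 m
  have pP2 : ∀ x, β' (T x) = ρ (β x) := fun x => DFunLike.congr_fun P2 x
  have pP3 : ∀ x, dD' (T x) = T (dD x) := fun x => DFunLike.congr_fun P3 x
  refine ⟨P1, P2, P3, ?_, ?_, ?_⟩
  · -- cycles to cycles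
    intro x hx
    rw [pP3, hx, map_zero]
  · -- injectivity on homology
    intro x hx hex
    obtain ⟨b, hb⟩ := hex
    have hβx : dp (β x) = 0 := by rw [pβ, hx, map_zero]
    have hstep2 : ρ (β x) = dp' (β' b) := by
      calc ρ (β x) = β' (T x) := (pP2 x).symm
        _ = β' (dD' b) := by rw [hb]
        _ = dp' (β' b) := (pβ' b).symm
    set c := eρ.symm (β' b) with hc
    have hβx2 : β x = dp c := by
      have h := congrArg eρ.symm hstep2
      rw [ρsymmρ] at h
      rw [h, hc, pρinv]
    have hmem : x - dD (bbar c) ∈ α.range := by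
      rw [hexact, AddMonoidHom.mem_ker, map_sub]
      have hb1 : β (dD (bbar c)) = dp c := by rw [← pβ, i2]
      rw [hb1, hβx2, sub_self]
    obtain ⟨m, hm⟩ := hmem
    have hdmm : dm m = 0 := by
      apply hainj
      rw [map_zero, ← pα, hm, map_sub, hx, pdD, sub_zero]
    set b'' := b - T (bbar c) with hb''
    have hfm : α' (f m) = dD' b'' := by
      calc α' (f m) = T (α m) := (pP1 m).symm
        _ = T x - T (dD (bbar c)) := by rw [← map_sub, hm]
        _ = dD' b - dD' (T (bbar c)) := by rw [hb, pP3]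
        _ = dD' b'' := by rw [← map_sub]
    have hβdb : β' (dD' b'') = 0 := by rw [← hfm, i5']
    have hdp'' : dp' (β' b'') = 0 := by rw [pβ', hβdb]
    set z := eρ.symm (β' b'') with hz
    have hρz : ρ z = β' b'' := psymmρ _
    have hdpz : dp z = 0 := by rw [hz, pρinv, hdp'', map_zero]
    have hdec : dD' b'' = α' (dm' (abar' b'') + abar' (dD' (bbar' (β' b'')))) := by
      have h0 : β' (dD' b'') = 0 := hβdb
      conv_lhs => rw [← i3' (dD' b'')]
      rw [h0, map_zero, add_zero, abarD' b'', map_add]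
    have key : f m = dm' (abar' b'') + f (abar (dD (bbar z))) := by
      have h := hainj' (hfm.trans hdec)
      rw [h, ← hρz, ← pcompat]
    have key2 : f (m - abar (dD (bbar z))) = dm' (abar' b'') := by
      rw [map_sub, key]
      abel
    have hmz : m - abar (dD (bbar z)) = dm (ef.symm (abar' b'')) := by
      apply hfbij.1
      rw [key2, ← pf, psymmf]
    have hαγ : dD (bbar z) = α (abar (dD (bbar z))) := by
      have h := dbbar z
      rw [hdpz, map_zero, add_zero] at h
      exact h
    have hx2 : x = dD (bbar c) + dD (bbar z) + dD (α (ef.symm (abar' b''))) := by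
      have h2x : dD (α (ef.symm (abar' b''))) = α (dm (ef.symm (abar' b''))) := pα _
      have h3x : α (dm (ef.symm (abar' b''))) = α m - α (abar (dD (bbar z))) := by
        rw [← hmz, map_sub]
      rw [h2x, h3x, hm, ← hαγ]
      abel
    exact ⟨bbar c + bbar z + α (ef.symm (abar' b'')), by rw [map_add, map_add]; exact hx2⟩
  · -- surjectivity on homology
    intro y hy
    set z := eρ.symm (β' y) with hz
    have hρz : ρ z = β' y := psymmρ _
    have hdpz : dp z = 0 := by rw [hz, pρinv, pβ', hy, map_zero, map_zero]
    have hT1 : T (bbar z) = bbar' (β' y) := by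
      rw [pT, i2, i4, map_zero, map_zero, add_zero, hρz]
    have hdm'n : dm' (abar' y) = - f (abar (dD (bbar z))) := by
      have h := abarD' y
      rw [hy, map_zero, ← hρz, ← pcompat] at h
      exact eq_neg_of_add_eq_zero_left h.symm
    set u := ef.symm (abar' y) with hu
    have hdmu : dm u = - abar (dD (bbar z)) := by
      apply hfbij.1
      rw [← pf, hu, psymmf, hdm'n, map_neg]
    have hαγ : dD (bbar z) = α (abar (dD (bbar z))) := by
      have h := dbbar z
      rw [hdpz, map_zero, add_zero] at h
      exact h
    refine ⟨bbar z + α u, ?_, 0, ?_⟩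
    · rw [map_add, hαγ, pα, hdmu, map_neg]
      abel
    · rw [map_zero, add_zero, map_add, hT1, pP1, hu, psymmf, add_comm]
      exact (i3' y).symm
end
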